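/- arXiv:1706.05716 — 4 statements merged into one kernel-verified Lean document; each statement's English description precedes it below -/
import Mathlib

section
/- For u < v and an α-regular Volterra kernel K with 0 < α < 1/2 satisfying |∂K/∂u(u,r)| ≤ C(u−r)^{α−1} on {r < u}, the function φ(u,v) = ∫_{−∞}^{u∧v} ∂K/∂u(u,r) · ∂K/∂v(v,r) dr satisfies |φ(u,v)| ≤ C' |u−v|^{2α−1} for some constant C' depending only on C and α. -/
/-!
Bounding each factor gives `|K'(u,r) K'(v,r)| ≤ C² (u-r)^(α-1) (v-r)^(α-1)`. The substitution
`r = u - (v-u) t` turns the integral of this majorant over `r < u` into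
`(v-u)^(2α-1) ∫₀^∞ t^(α-1) (1+t)^(α-1) dt`, and the last integral is the Beta integral
`B(α, 1-2α)`: it converges because `t^(α-1)` is integrable at `0` and `t^(2α-2)` at `∞`
exactly when `0 < α < 1/2`.
-/

open MeasureTheory Real Set

section Reflection

variable {E : Type*} [NormedAddCommGroup E]

theorem integrableOn_Iio_comp_sub_left_iff (f : ℝ → E) (u : ℝ) :
    IntegrableOn (fun r => f (u - r)) (Iio u) ↔ IntegrableOn f (Ioi 0) := by
  have := (Measure.measurePreserving_sub_left volume u).integrableOn_comp_preimage
    (MeasurableEquiv.subLeft u).measurableEmbedding (f := f) (s := Ioi 0)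
  rwa [preimage_const_sub_Ioi, sub_zero] at this

theorem setIntegral_Iio_comp_sub_left [NormedSpace ℝ E] (f : ℝ → E) (u : ℝ) :
    ∫ r in Iio u, f (u - r) = ∫ s in Ioi 0, f s := by
  have := (Measure.measurePreserving_sub_left volume u).setIntegral_preimage_emb
    (MeasurableEquiv.subLeft u).measurableEmbedding f (Ioi 0)
  rwa [preimage_const_sub_Ioi, sub_zero] at this

end Reflection

section Scaling

variable {β d : ℝ}

theorem rpow_mul_add_rpow_eq (hd : 0 < d) {s : ℝ} (hs : 0 ≤ s) :
    s ^ β * (s + d) ^ β = d ^ (2 * β) * ((d⁻¹ * s) ^ β * (1 + d⁻¹ * s) ^ β) := by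
  have ht : 0 ≤ d⁻¹ * s := by positivity
  have hs_eq : s = d * (d⁻¹ * s) := by field_simp
  have hsd_eq : s + d = d * (1 + d⁻¹ * s) := by field_simp; ring
  rw [hsd_eq, hs_eq, mul_rpow hd.le ht, mul_rpow hd.le (by positivity), ← hs_eq, two_mul,
    rpow_add hd]
  ring

theorem integrableOn_rpow_mul_add_rpow (hd : 0 < d)
    (h : IntegrableOn (fun t : ℝ => t ^ β * (1 + t) ^ β) (Ioi 0)) :
    IntegrableOn (fun s : ℝ => s ^ β * (s + d) ^ β) (Ioi 0) := by
  have hscaled := (integrableOn_Ioi_comp_mul_left_iff (fun t : ℝ => t ^ β * (1 + t) ^ β) 0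
    (inv_pos.2 hd)).2 (by rwa [mul_zero])
  exact IntegrableOn.congr_fun (hscaled.const_mul (d ^ (2 * β)))
    (fun s hs => (rpow_mul_add_rpow_eq hd (le_of_lt hs)).symm) measurableSet_Ioi

theorem integral_rpow_mul_add_rpow (hd : 0 < d) :
    ∫ s in Ioi 0, s ^ β * (s + d) ^ β
      = d ^ (2 * β + 1) * ∫ t in Ioi 0, t ^ β * (1 + t) ^ β := by
  rw [setIntegral_congr_fun measurableSet_Ioi fun s hs => rpow_mul_add_rpow_eq hd (le_of_lt hs),
    integral_const_mul,
    integral_comp_mul_left_Ioi (fun t => t ^ β * (1 + t) ^ β) 0 (inv_pos.2 hd),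
    mul_zero, inv_inv, smul_eq_mul, ← mul_assoc, rpow_add_one hd.ne']

end Scaling

section BetaIntegral

variable {β : ℝ}

theorem integrableOn_rpow_mul_one_add_rpow (hβ : -1 < β) (hβ' : 2 * β < -1) :
    IntegrableOn (fun t : ℝ => t ^ β * (1 + t) ^ β) (Ioi 0) := by
  have hmeas : AEStronglyMeasurable (fun t : ℝ => t ^ β * (1 + t) ^ β) := by fun_prop
  rw [← Ioc_union_Ioi_eq_Ioi zero_le_one]
  refine IntegrableOn.union ?_ ?_
  · refine Integrable.mono' (intervalIntegral.intervalIntegrable_rpow' hβ).1 hmeas.restrict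
      ((ae_restrict_iff' measurableSet_Ioc).2 (ae_of_all _ fun t ht => ?_))
    have ht0 : 0 < t := ht.1
    have hle : (1 + t) ^ β ≤ 1 := rpow_le_one_of_one_le_of_nonpos (by linarith) (by linarith)
    rw [norm_mul, norm_of_nonneg (by positivity), norm_of_nonneg (by positivity)]
    exact mul_le_of_le_one_right (by positivity) hle
  · refine Integrable.mono' (integrableOn_Ioi_rpow_of_lt hβ' zero_lt_one) hmeas.restrict
      ((ae_restrict_iff' measurableSet_Ioi).2 (ae_of_all _ fun t ht => ?_))
    have ht0 : (0 : ℝ) < t := zero_lt_one.trans ht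
    have hle : (1 + t) ^ β ≤ t ^ β := rpow_le_rpow_of_nonpos ht0 (by linarith) (by linarith)
    rw [norm_mul, norm_of_nonneg (by positivity), norm_of_nonneg (by positivity), two_mul,
      rpow_add ht0]
    exact mul_le_mul_of_nonneg_left hle (by positivity)

theorem integral_rpow_mul_one_add_rpow_pos
    (h : IntegrableOn (fun t : ℝ => t ^ β * (1 + t) ^ β) (Ioi 0)) :
    0 < ∫ t in Ioi (0 : ℝ), t ^ β * (1 + t) ^ β := by
  have hpos : ∀ t ∈ Ioi (0 : ℝ), 0 < t ^ β * (1 + t) ^ β :=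
    fun t (ht : 0 < t) => by positivity
  rw [setIntegral_pos_iff_support_of_nonneg_ae
    ((ae_restrict_iff' measurableSet_Ioi).2 (ae_of_all _ fun t ht => (hpos t ht).le)) h,
    inter_eq_right.2 fun t ht => Function.mem_support.2 (hpos t ht).ne', volume_Ioi]
  exact ENNReal.zero_lt_top

end BetaIntegral

section Kernel

variable {β u v : ℝ}

theorem integrableOn_Iio_rpow_sub_mul_rpow_sub (huv : u < v)
    (h : IntegrableOn (fun t : ℝ => t ^ β * (1 + t) ^ β) (Ioi 0)) :
    IntegrableOn (fun r => (u - r) ^ β * (v - r) ^ β) (Iio u) := by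
  simpa only [sub_add_sub_cancel'] using (integrableOn_Iio_comp_sub_left_iff
    (fun s => s ^ β * (s + (v - u)) ^ β) u).2 (integrableOn_rpow_mul_add_rpow (sub_pos.2 huv) h)

theorem integral_Iio_rpow_sub_mul_rpow_sub (huv : u < v) :
    ∫ r in Iio u, (u - r) ^ β * (v - r) ^ β
      = (v - u) ^ (2 * β + 1) * ∫ t in Ioi (0 : ℝ), t ^ β * (1 + t) ^ β := by
  simpa only [sub_add_sub_cancel'] using
    (setIntegral_Iio_comp_sub_left (fun s => s ^ β * (s + (v - u)) ^ β) u).trans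
      (integral_rpow_mul_add_rpow (sub_pos.2 huv))

end Kernel

/-- If `K'` (the partial derivative `∂K/∂u`) of an `α`-regular Volterra
kernel satisfies `|K' u r| ≤ C (u-r)^(α-1)` for `r < u`, then
`φ(u,v) = ∫_{-∞}^{u ∧ v} K'(u,r) K'(v,r) dr` satisfies
`|φ(u,v)| ≤ C' |u-v|^(2α-1)` for `u < v`, with `C'` depending only on `C` and `α`. -/
theorem stmt0 :
    ∀ (α C : ℝ), 0 < α → α < 1/2 → 0 < C →
    ∃ C' : ℝ, 0 < C' ∧
      ∀ (K' : ℝ → ℝ → ℝ),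
        (∀ u r : ℝ, r < u → |K' u r| ≤ C * (u - r) ^ (α - 1)) →
        ∀ u v : ℝ, u < v →
          |∫ r in Set.Iio (min u v), K' u r * K' v r| ≤ C' * |u - v| ^ (2 * α - 1) := by
  intro α C hα hα' hC
  have hB := integrableOn_rpow_mul_one_add_rpow (β := α - 1) (by linarith) (by linarith)
  refine ⟨C ^ 2 * ∫ t in Ioi (0 : ℝ), t ^ (α - 1) * (1 + t) ^ (α - 1),
    mul_pos (by positivity) (integral_rpow_mul_one_add_rpow_pos hB), ?_⟩
  intro K' hK u v huv
  have hbound : ∀ r ∈ Iio u,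
      ‖K' u r * K' v r‖ ≤ C ^ 2 * ((u - r) ^ (α - 1) * (v - r) ^ (α - 1)) := fun r hr => by
    rw [norm_mul, sq, mul_mul_mul_comm]
    exact mul_le_mul (hK u r hr) (hK v r (hr.trans huv)) (abs_nonneg _)
      ((abs_nonneg _).trans (hK u r hr))
  have hmajorant := (integrableOn_Iio_rpow_sub_mul_rpow_sub huv hB).const_mul (C ^ 2)
  rw [min_eq_left huv.le, abs_sub_comm u v, abs_of_pos (sub_pos.2 huv), ← norm_eq_abs]
  refine (norm_integral_le_of_norm_le hmajorant
    ((ae_restrict_iff' measurableSet_Iio).2 (ae_of_all _ hbound))).trans_eq ?_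
  rw [integral_const_mul, integral_Iio_rpow_sub_mul_rpow_sub huv,
    show 2 * (α - 1) + 1 = 2 * α - 1 by ring]
  ring
end

section
/- Let K^H(t,r) = c_H ∫_r^t (u−r)^{H−3/2} du for r < t, with H ∈ (1/2,1). Then for all s₁ < t₁ and s₂ < t₂, ∫_ℝ (K^H(t₁,r) − K^H(s₁,r))(K^H(t₂,r) − K^H(s₂,r)) dr = H(2H−1) ∫_{s₁}^{t₁} ∫_{s₂}^{t₂} |u−v|^{2H−2} du dv, provided c_H² · B(H−1/2, 2−2H) = H(2H−1) where B is the Beta function. -/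
/-!
Write `α = H - 3/2` and `x₊^α` for the one-sided power. For every `r`,
`K^H(t,r) - K^H(s,r) = c_H ∫_s^t (u - r)₊^α du`, so by Tonelli (all integrands are nonnegative,
so the computation is done in `ℝ≥0∞`) the left-hand side is
`c_H² ∫_{s₁}^{t₁} ∫_{s₂}^{t₂} ∫_ℝ (u - r)₊^α (v - r)₊^α dr dv du`.
For `u < v` the substitution `r = u - (v - u) x / (1 - x)` turns the inner integral into
`(v - u)^(2α+1) ∫_0^1 x^α (1 - x)^(-2α-2) dx = B(H - 1/2, 2 - 2H) |u - v|^(2H-2)`.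
-/

open MeasureTheory Real intervalIntegral Set ProbabilityTheory
open scoped ENNReal

lemma lintegral_mul_lintegral_eq_lintegral_lintegral_lintegral {α β γ : Type*}
    [MeasurableSpace α] [MeasurableSpace β] [MeasurableSpace γ]
    {μ : Measure α} {ν : Measure β} {ρ : Measure γ} [SFinite μ] [SFinite ν] [SFinite ρ]
    {f : α → γ → ℝ≥0∞} {g : β → γ → ℝ≥0∞}
    (hf : Measurable (Function.uncurry f)) (hg : Measurable (Function.uncurry g)) :
    ∫⁻ r, (∫⁻ u, f u r ∂μ) * (∫⁻ v, g v r ∂ν) ∂ρ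
      = ∫⁻ u, ∫⁻ v, ∫⁻ r, f u r * g v r ∂ρ ∂ν ∂μ := by
  have hF : Measurable fun p : (γ × α) × β => f p.1.2 p.1.1 * g p.2 p.1.1 :=
    (hf.comp (measurable_fst.snd.prodMk measurable_fst.fst)).mul
      (hg.comp (measurable_snd.prodMk measurable_fst.fst))
  have hprod : ∀ r, (∫⁻ u, f u r ∂μ) * (∫⁻ v, g v r ∂ν) = ∫⁻ u, ∫⁻ v, f u r * g v r ∂ν ∂μ := by
    intro r
    have hfr : Measurable fun u => f u r := hf.comp (measurable_id.prodMk measurable_const)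
    have hgr : Measurable fun v => g v r := hg.comp (measurable_id.prodMk measurable_const)
    rw [← lintegral_mul_const'' _ hfr.aemeasurable]
    exact lintegral_congr fun u => (lintegral_const_mul'' _ hgr.aemeasurable).symm
  simp_rw [hprod]
  rw [lintegral_lintegral_swap (hF.lintegral_prod_right').aemeasurable]
  refine lintegral_congr fun u => lintegral_lintegral_swap ?_
  exact (hF.comp ((measurable_fst.prodMk measurable_const).prodMk measurable_snd)).aemeasurable

lemma integral_integral_eq_toReal_lintegral_lintegral {α β : Type*}
    [MeasurableSpace α] [MeasurableSpace β] {μ : Measure α} {ν : Measure β} [SFinite ν]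
    {f : α → β → ℝ} (hf : Measurable (Function.uncurry f)) (hf₀ : ∀ u v, 0 ≤ f u v)
    (hfi : ∀ u, Integrable (f u) ν) :
    ∫ u, ∫ v, f u v ∂ν ∂μ = (∫⁻ u, ∫⁻ v, ENNReal.ofReal (f u v) ∂ν ∂μ).toReal := by
  have hinner : ∀ u, ∫ v, f u v ∂ν = (∫⁻ v, ENNReal.ofReal (f u v) ∂ν).toReal := fun u =>
    integral_eq_lintegral_of_nonneg_ae (ae_of_all _ (hf₀ u)) (hfi u).aestronglyMeasurable
  simp_rw [hinner]
  exact integral_toReal hf.ennreal_ofReal.lintegral_prod_right'.aemeasurable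
    (ae_of_all _ fun u => (hfi u).lintegral_lt_top)

lemma intervalIntegrable_abs_rpow {p : ℝ} (hp : -1 < p) (a b : ℝ) :
    IntervalIntegrable (fun x => |x| ^ p) volume a b := by
  have hnonneg : ∀ c, 0 ≤ c → IntervalIntegrable (fun x => |x| ^ p) volume 0 c := fun c hc =>
    (intervalIntegrable_rpow' hp).congr fun x hx => by
      rw [uIoc_of_le hc] at hx
      simp [abs_of_pos hx.1]
  have h : ∀ c, IntervalIntegrable (fun x => |x| ^ p) volume 0 c := by
    intro c
    rcases le_total 0 c with hc | hc
    · exact hnonneg c hc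
    · rw [IntervalIntegrable.iff_comp_neg]
      simpa using hnonneg (-c) (by linarith)
  exact (h a).symm.trans (h b)

/-- `x₊^α`; the indicator matters because `Real.rpow` is not zero at negative bases. -/
noncomputable def posRpow (α x : ℝ) : ℝ := (Ioi 0).indicator (· ^ α) x

lemma posRpow_nonneg (α x : ℝ) : 0 ≤ posRpow α x :=
  indicator_nonneg (fun _ hx => rpow_nonneg (le_of_lt hx) α) x

lemma measurable_posRpow (α : ℝ) : Measurable (posRpow α) :=
  (measurable_id.pow_const α).indicator measurableSet_Ioi

lemma posRpow_sub_eq_indicator (α r : ℝ) :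
    (fun u => posRpow α (u - r)) = (Ioi r).indicator (fun u => (u - r) ^ α) := by
  ext u
  simp [posRpow, indicator_apply]

lemma integrableOn_Iic_posRpow_sub {α : ℝ} (hα : -1 < α) (r t : ℝ) :
    IntegrableOn (fun u => posRpow α (u - r)) (Iic t) := by
  rw [posRpow_sub_eq_indicator, integrableOn_indicator_iff measurableSet_Ioi, Ioi_inter_Iic]
  simpa using ((intervalIntegrable_rpow' hα (a := r - r) (b := t - r)).comp_sub_right r).1

lemma setIntegral_Iic_posRpow_sub (α r t : ℝ) :
    ∫ u in Iic t, posRpow α (u - r) = if r < t then ∫ u in r..t, (u - r) ^ α else 0 := by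
  rw [posRpow_sub_eq_indicator, setIntegral_indicator measurableSet_Ioi, Iic_inter_Ioi]
  split_ifs with h
  · rw [integral_of_le h.le]
  · simp [Ioc_eq_empty h]

lemma sub_eq_mul_intervalIntegral_posRpow_sub {α c : ℝ} (hα : -1 < α) {K : ℝ → ℝ → ℝ}
    (hK : ∀ t r, K t r = if r < t then c * ∫ u in r..t, (u - r) ^ α else 0) (s t r : ℝ) :
    K t r - K s r = c * ∫ u in s..t, posRpow α (u - r) := by
  have hK' : ∀ t, K t r = c * ∫ u in Iic t, posRpow α (u - r) := fun t => by
    rw [hK, setIntegral_Iic_posRpow_sub, mul_ite, mul_zero]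
  rw [hK', hK', ← mul_sub, integral_Iic_sub_Iic (integrableOn_Iic_posRpow_sub hα r s)
    (integrableOn_Iic_posRpow_sub hα r t)]

lemma ofReal_intervalIntegral_posRpow_sub {α : ℝ} (hα : -1 < α) {s t : ℝ} (hst : s ≤ t)
    (r : ℝ) :
    ENNReal.ofReal (∫ u in s..t, posRpow α (u - r))
      = ∫⁻ u in Ioc s t, ENNReal.ofReal (posRpow α (u - r)) := by
  rw [integral_of_le hst]
  exact ofReal_integral_eq_lintegral_ofReal
    ((integrableOn_Iic_posRpow_sub hα r t).mono_set Ioc_subset_Iic_self)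
    (ae_of_all _ fun _ => posRpow_nonneg _ _)

lemma lintegral_Ioo_rpow_mul_one_sub_rpow {a b : ℝ} (ha : 0 < a) (hb : 0 < b) :
    ∫⁻ x in Ioo 0 1, ENNReal.ofReal (x ^ (a - 1) * (1 - x) ^ (b - 1))
      = ENNReal.ofReal (beta a b) := by
  have hB := beta_pos ha hb
  have h := lintegral_betaPDF_eq_one ha hb
  simp_rw [lintegral_betaPDF, mul_assoc, ENNReal.ofReal_mul (one_div_pos.2 hB).le] at h
  rw [lintegral_const_mul' _ _ ENNReal.ofReal_ne_top, one_div, ENNReal.ofReal_inv_of_pos hB] at h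
  rw [mul_comm, ← div_eq_mul_inv] at h
  exact (ENNReal.div_eq_one_iff (by simpa using hB) ENNReal.ofReal_ne_top).1 h

lemma lintegral_Iio_rpow_mul_rpow {α u v : ℝ} (hα₁ : -1 < α) (hα₂ : α < -1/2) (huv : u < v) :
    ∫⁻ r in Iio u, ENNReal.ofReal ((u - r) ^ α * (v - r) ^ α)
      = ENNReal.ofReal ((v - u) ^ (2 * α + 1)) * ENNReal.ofReal (beta (α + 1) (-2 * α - 1)) := by
  obtain ⟨d, hd, rfl⟩ : ∃ d, 0 < d ∧ v = u + d := ⟨v - u, sub_pos.2 huv, by ring⟩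
  -- `φ` maps `(0, 1)` onto `(-∞, u)`, with `u - φ x = d x / (1 - x)` and `v - φ x = d / (1 - x)`
  set φ : ℝ → ℝ := fun x => u - d * x / (1 - x) with hφ
  have hφ' : ∀ x ∈ Ioo (0 : ℝ) 1, HasDerivWithinAt φ (-(d / (1 - x) ^ 2)) (Ioo 0 1) x := by
    intro x hx
    have hw : 1 - x ≠ 0 := by linarith [hx.2]
    have h := (((hasDerivAt_id x).const_mul d).div
      ((hasDerivAt_const x 1).sub (hasDerivAt_id x)) hw).const_sub u
    refine h.hasDerivWithinAt.congr_deriv ?_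
    simp only [Pi.sub_apply, id]
    field_simp
    ring
  have hφinj : InjOn φ (Ioo 0 1) := by
    intro x hx y hy hxy
    have hwx : 1 - x ≠ 0 := by linarith [hx.2]
    have hwy : 1 - y ≠ 0 := by linarith [hy.2]
    simp only [hφ, sub_right_inj] at hxy
    field_simp at hxy
    nlinarith
  have hφimage : φ '' Ioo 0 1 = Iio u := by
    ext r
    constructor
    · rintro ⟨x, hx, rfl⟩
      have : 0 < d * x / (1 - x) := div_pos (mul_pos hd hx.1) (by linarith [hx.2])
      simp only [hφ, mem_Iio]
      linarith
    · intro hr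
      have hr' : 0 < u - r := sub_pos.2 hr
      refine ⟨(u - r) / (u - r + d),
        ⟨by positivity, (div_lt_one (by positivity)).2 (by linarith)⟩, ?_⟩
      simp only [hφ]
      field_simp [hd.ne']
      ring
  rw [← hφimage, lintegral_image_eq_lintegral_abs_deriv_mul measurableSet_Ioo hφ' hφinj,
    ← lintegral_Ioo_rpow_mul_one_sub_rpow (by linarith) (by linarith),
    ← lintegral_const_mul' _ _ ENNReal.ofReal_ne_top]
  refine setLIntegral_congr_fun measurableSet_Ioo fun x hx => ?_
  have hx0 : 0 < x := hx.1
  have hw : 0 < 1 - x := by linarith [hx.2]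
  have hu : u - φ x = d * x / (1 - x) := by simp only [hφ]; ring
  have hv : u + d - φ x = d / (1 - x) := by simp only [hφ]; field_simp; ring
  rw [hu, hv, abs_neg, abs_of_pos (by positivity), ← ENNReal.ofReal_mul (by positivity),
    ← ENNReal.ofReal_mul (by positivity)]
  congr 1
  rw [add_sub_cancel_left, div_rpow (by positivity) hw.le, mul_rpow hd.le hx0.le,
    div_rpow hd.le hw.le, show α + 1 - 1 = α by ring,
    show -2 * α - 1 - 1 = -(α + α + 2) by ring, rpow_neg hw.le,
    rpow_add hw, rpow_add hw, show 2 * α + 1 = α + α + 1 by ring, rpow_add hd, rpow_add hd,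
    rpow_one, rpow_two]
  field_simp

lemma lintegral_posRpow_sub_mul_posRpow_sub {α u v : ℝ} (hα₁ : -1 < α) (hα₂ : α < -1/2)
    (huv : u ≠ v) :
    ∫⁻ r, ENNReal.ofReal (posRpow α (u - r)) * ENNReal.ofReal (posRpow α (v - r))
      = ENNReal.ofReal (|u - v| ^ (2 * α + 1)) * ENNReal.ofReal (beta (α + 1) (-2 * α - 1)) := by
  wlog h : u < v generalizing u v
  · simpa only [mul_comm, abs_sub_comm] using this huv.symm (huv.symm.lt_of_le (not_lt.1 h))
  have hprod : ∀ r, ENNReal.ofReal (posRpow α (u - r)) * ENNReal.ofReal (posRpow α (v - r))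
      = (Iio u).indicator (fun r => ENNReal.ofReal ((u - r) ^ α * (v - r) ^ α)) r := by
    intro r
    by_cases hr : r < u
    · simp [posRpow, hr, h.trans' hr, ENNReal.ofReal_mul (rpow_nonneg (sub_pos.2 hr).le α)]
    · simp [posRpow, hr]
  rw [lintegral_congr hprod, lintegral_indicator measurableSet_Iio,
    lintegral_Iio_rpow_mul_rpow hα₁ hα₂ h, abs_sub_comm, abs_of_pos (sub_pos.2 h)]

lemma stronglyMeasurable_intervalIntegral_posRpow_sub (α s t : ℝ) :
    StronglyMeasurable fun r => ∫ u in s..t, posRpow α (u - r) := by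
  have h : StronglyMeasurable (Function.uncurry fun r u => posRpow α (u - r)) :=
    ((measurable_posRpow α).comp (measurable_snd.sub measurable_fst)).stronglyMeasurable
  simp only [intervalIntegral]
  exact h.integral_prod_right.sub h.integral_prod_right

theorem integral_intervalIntegral_posRpow_sub_mul {α s₁ t₁ s₂ t₂ : ℝ} (hα₁ : -1 < α)
    (hα₂ : α < -1/2) (h₁ : s₁ ≤ t₁) (h₂ : s₂ ≤ t₂) :
    ∫ r, (∫ u in s₁..t₁, posRpow α (u - r)) * (∫ v in s₂..t₂, posRpow α (v - r))
      = beta (α + 1) (-2 * α - 1) * ∫ u in s₁..t₁, ∫ v in s₂..t₂, |u - v| ^ (2 * α + 1) := by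
  have hk : Measurable (Function.uncurry fun u r => ENNReal.ofReal (posRpow α (u - r))) :=
    ((measurable_posRpow α).comp (measurable_fst.sub measurable_snd)).ennreal_ofReal
  have hlhs : ∫ r, (∫ u in s₁..t₁, posRpow α (u - r)) * (∫ v in s₂..t₂, posRpow α (v - r))
      = (∫⁻ u in Ioc s₁ t₁, ∫⁻ v in Ioc s₂ t₂, ∫⁻ r,
          ENNReal.ofReal (posRpow α (u - r)) * ENNReal.ofReal (posRpow α (v - r))).toReal := by
    have hnonneg : ∀ {s t}, s ≤ t → ∀ r, 0 ≤ ∫ u in s..t, posRpow α (u - r) :=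
      fun hst _ => integral_nonneg hst fun _ _ => posRpow_nonneg _ _
    rw [integral_eq_lintegral_of_nonneg_ae
      (ae_of_all _ fun r => mul_nonneg (hnonneg h₁ r) (hnonneg h₂ r))
      ((stronglyMeasurable_intervalIntegral_posRpow_sub α s₁ t₁).mul
        (stronglyMeasurable_intervalIntegral_posRpow_sub α s₂ t₂)).aestronglyMeasurable]
    simp_rw [ENNReal.ofReal_mul (hnonneg h₁ _), ofReal_intervalIntegral_posRpow_sub hα₁ h₁,
      ofReal_intervalIntegral_posRpow_sub hα₁ h₂]
    rw [lintegral_mul_lintegral_eq_lintegral_lintegral_lintegral hk hk]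
  have hrhs : ∫ u in s₁..t₁, ∫ v in s₂..t₂, |u - v| ^ (2 * α + 1)
      = (∫⁻ u in Ioc s₁ t₁, ∫⁻ v in Ioc s₂ t₂,
          ENNReal.ofReal (|u - v| ^ (2 * α + 1))).toReal := by
    simp only [integral_of_le h₁, integral_of_le h₂]
    refine integral_integral_eq_toReal_lintegral_lintegral ?_
      (fun _ _ => rpow_nonneg (abs_nonneg _) _) fun u => ?_
    · exact ((measurable_fst.sub measurable_snd).abs.pow_const _)
    · have h := (intervalIntegrable_abs_rpow (p := 2 * α + 1) (by linarith)
        (u - s₂) (u - t₂)).comp_sub_left u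
      simp only [sub_sub_cancel] at h
      exact h.1
  rw [hlhs, hrhs, mul_comm, ← ENNReal.toReal_ofReal (beta_pos (by linarith) (by linarith)).le,
    ← ENNReal.toReal_mul, ← lintegral_mul_const' _ _ ENNReal.ofReal_ne_top]
  congr 1
  refine lintegral_congr fun u => ?_
  rw [← lintegral_mul_const' _ _ ENNReal.ofReal_ne_top]
  refine lintegral_congr_ae ?_
  filter_upwards [ae_restrict_of_ae (volume.ae_ne u)] with v hv
  exact lintegral_posRpow_sub_mul_posRpow_sub hα₁ hα₂ hv.symm

/-- For the fBm kernel `K^H(t,r) = c_H ∫_r^t (u-r)^(H-3/2) du` (set to `0`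
for `t ≤ r`), with `H ∈ (1/2,1)` and `c_H² B(H-1/2, 2-2H) = H(2H-1)`, one has for
`s₁ < t₁`, `s₂ < t₂`:
`∫_ℝ (K^H(t₁,r) - K^H(s₁,r))(K^H(t₂,r) - K^H(s₂,r)) dr
  = H(2H-1) ∫_{s₁}^{t₁} ∫_{s₂}^{t₂} |u-v|^(2H-2) du dv`. -/
theorem stmt4 (H cH : ℝ) (hH1 : 1/2 < H) (hH2 : H < 1)
    (hc : cH ^ 2 * (Real.Gamma (H - 1/2) * Real.Gamma (2 - 2*H) / Real.Gamma (3/2 - H))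
        = H * (2*H - 1))
    (KH : ℝ → ℝ → ℝ)
    (hKH : ∀ t r : ℝ, KH t r =
      if r < t then cH * ∫ u in r..t, (u - r) ^ (H - 3/2) else 0)
    (s₁ t₁ s₂ t₂ : ℝ) (h₁ : s₁ < t₁) (h₂ : s₂ < t₂) :
    ∫ r : ℝ, (KH t₁ r - KH s₁ r) * (KH t₂ r - KH s₂ r) =
      H * (2*H - 1) * ∫ u in s₁..t₁, ∫ v in s₂..t₂, |u - v| ^ (2*H - 2) := by
  have hα₁ : -1 < H - 3/2 := by linarith
  have hα₂ : H - 3/2 < -1/2 := by linarith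
  have hB : beta (H - 3/2 + 1) (-2 * (H - 3/2) - 1)
      = Real.Gamma (H - 1/2) * Real.Gamma (2 - 2*H) / Real.Gamma (3/2 - H) := by
    unfold beta
    ring_nf
  simp_rw [sub_eq_mul_intervalIntegral_posRpow_sub hα₁ hKH, mul_mul_mul_comm cH, ← pow_two]
  rw [MeasureTheory.integral_const_mul,
    integral_intervalIntegral_posRpow_sub_mul hα₁ hα₂ h₁.le h₂.le, ← mul_assoc, hB, hc,
    show 2 * (H - 3/2) + 1 = 2 * H - 2 by ring]
end

section
/- Let α ∈ (0,1/2), s < t, and G : ℝ → ℒ₂(U,V) (Hilbert–Schmidt operators between separable Hilbert spaces) with ‖G‖_{ℒ₂(U,V)} ∈ L^{2/(1+2α)}(s,t). If φ : ℝ² → ℝ satisfies |φ(u,v)| ≤ C|u−v|^{2α−1}, then ∫_s^t ∫_s^t ⟨G(u), G(v)⟩_{ℒ₂(U,V)} φ(u,v) du dv ≤ C' (∫_s^t ‖G(u)‖_{ℒ₂(U,V)}^{2/(1+2α)} du)^{1+2α} for some constant C' depending only on C and α. -/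
/-!
Cauchy–Schwarz bounds the integrand by `C ‖G u‖ ‖G v‖ |u - v| ^ (2α - 1)`, so everything reduces
to the diagonal one-dimensional Hardy–Littlewood–Sobolev inequality
`∫∫ f u f v |u - v| ^ (2α - 1) ≤ c (∫ f ^ p) ^ (1 + 2α)` with `p = 2 / (1 + 2α)`, proved by
Hedberg's argument. By symmetry only the pairs with `f v ≤ f u` matter. For fixed `u`, split the
kernel at a radius `r`: near `u` bound `f v` by `f u`, which leaves `f u ^ 2 r ^ (2α) / α`; far
from `u` use Hölder with the conjugate exponent `q = 2 / (1 - 2α)`, for which the kernel becomes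
`|u - v| ^ (-2)`, of integral `2 / r`. The choice `r = (‖f‖_p / f u) ^ p` bounds the inner
integral by a multiple of `‖f‖_p ^ (4α / (1 + 2α)) f u ^ p`, and integrating in `u` gives
`‖f‖_p ^ 2 = (∫ f ^ p) ^ (1 + 2α)`.
-/

open MeasureTheory Real intervalIntegral Set
open scoped ENNReal

lemma lintegral_comp_abs (g : ℝ → ℝ≥0∞) : ∫⁻ x, g |x| = 2 * ∫⁻ x in Ioi 0, g x := by
  have hneg : ∫⁻ x in Iic 0, g |x| = ∫⁻ x in Ioi 0, g x := by
    rw [setLIntegral_congr Ioi_ae_eq_Ici,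
      ← (Measure.measurePreserving_neg volume).setLIntegral_comp_preimage_emb
        (Homeomorph.neg ℝ).measurableEmbedding g (Ici 0), neg_preimage, neg_Ici, neg_zero]
    exact setLIntegral_congr_fun measurableSet_Iic fun x hx => by
      rw [abs_of_nonpos hx]
  have hpos : ∫⁻ x in Ioi 0, g |x| = ∫⁻ x in Ioi 0, g x :=
    setLIntegral_congr_fun measurableSet_Ioi fun x hx => by rw [abs_of_pos hx]
  rw [← lintegral_add_compl _ measurableSet_Ioi, compl_Ioi, hneg, hpos, two_mul]

lemma lintegral_comp_abs_sub (g : ℝ → ℝ≥0∞) (u : ℝ) :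
    ∫⁻ v, g |u - v| = 2 * ∫⁻ x in Ioi 0, g x := by
  rw [lintegral_sub_left_eq_self (fun v => g |v|) u, lintegral_comp_abs]

lemma lintegral_indicator_Iio_rpow_abs_sub {e r : ℝ} (he : -1 < e) (hr : 0 < r) (u : ℝ) :
    ∫⁻ v, (Iio r).indicator (fun x => ENNReal.ofReal (x ^ e)) |u - v| =
      ENNReal.ofReal (2 * (r ^ (e + 1) / (e + 1))) := by
  have hint : IntegrableOn (fun x : ℝ => x ^ e) (Ioc 0 r) :=
    (intervalIntegral.intervalIntegrable_rpow' he).1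
  have hnonneg : 0 ≤ᵐ[volume.restrict (Ioc 0 r)] fun x : ℝ => x ^ e :=
    ae_restrict_of_forall_mem measurableSet_Ioc fun x hx => rpow_nonneg hx.1.le e
  rw [lintegral_comp_abs_sub, setLIntegral_indicator measurableSet_Iio, inter_comm, Ioi_inter_Iio,
    setLIntegral_congr Ioo_ae_eq_Ioc, ← ofReal_integral_eq_lintegral_ofReal hint hnonneg,
    ← intervalIntegral.integral_of_le hr.le, integral_rpow (Or.inl he),
    zero_rpow (by linarith), sub_zero, ENNReal.ofReal_mul zero_le_two, ENNReal.ofReal_ofNat]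

lemma lintegral_indicator_Ici_rpow_abs_sub {e r : ℝ} (he : e < -1) (hr : 0 < r) (u : ℝ) :
    ∫⁻ v, (Ici r).indicator (fun x => ENNReal.ofReal (x ^ e)) |u - v| =
      ENNReal.ofReal (2 * (-r ^ (e + 1) / (e + 1))) := by
  have hint : IntegrableOn (fun x : ℝ => x ^ e) (Ioi r) := integrableOn_Ioi_rpow_of_lt he hr
  have hnonneg : 0 ≤ᵐ[volume.restrict (Ioi r)] fun x : ℝ => x ^ e :=
    ae_restrict_of_forall_mem measurableSet_Ioi fun x hx => rpow_nonneg (hr.trans hx).le e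
  rw [lintegral_comp_abs_sub, setLIntegral_indicator measurableSet_Ici,
    inter_eq_left.2 (Ici_subset_Ioi.2 hr), ← setLIntegral_congr Ioi_ae_eq_Ici,
    ← ofReal_integral_eq_lintegral_ofReal hint hnonneg, integral_Ioi_rpow_of_lt he hr,
    ENNReal.ofReal_mul zero_le_two, ENNReal.ofReal_ofNat]

lemma lintegral_le_two_mul_lintegral_ite_of_symm {X : Type*} [MeasurableSpace X] {μ : Measure X}
    [SFinite μ] {f : X → ℝ≥0∞} (hf : Measurable f) {K : X → X → ℝ≥0∞}
    (hK : Measurable (Function.uncurry K)) (hKsymm : ∀ u v, K u v = K v u) :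
    ∫⁻ u, ∫⁻ v, f u * f v * K u v ∂μ ∂μ ≤
      2 * ∫⁻ u, ∫⁻ v, (if f v ≤ f u then f u * f v * K u v else 0) ∂μ ∂μ := by
  set H : X → X → ℝ≥0∞ := fun u v => if f v ≤ f u then f u * f v * K u v else 0
  have hH : Measurable (Function.uncurry H) :=
    Measurable.ite (measurableSet_le (hf.comp measurable_snd) (hf.comp measurable_fst))
      (((hf.comp measurable_fst).mul (hf.comp measurable_snd)).mul hK) measurable_const
  have hle : ∀ u v, f u * f v * K u v ≤ H u v + H v u := by
    intro u v
    rcases le_total (f v) (f u) with h | h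
    · simp only [H, if_pos h]; exact le_self_add
    · simp only [H, if_pos h]; rw [mul_comm (f u), hKsymm]; exact le_add_self
  calc ∫⁻ u, ∫⁻ v, f u * f v * K u v ∂μ ∂μ
      ≤ ∫⁻ u, ∫⁻ v, (H u v + H v u) ∂μ ∂μ :=
        lintegral_mono fun u => lintegral_mono fun v => hle u v
    _ = ∫⁻ u, ∫⁻ v, H u v ∂μ ∂μ + ∫⁻ u, ∫⁻ v, H v u ∂μ ∂μ := by
        rw [← lintegral_add_left (f := fun u => ∫⁻ v, H u v ∂μ) hH.lintegral_prod_right']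
        exact lintegral_congr fun u => lintegral_add_left (hH.comp measurable_prodMk_left) _
    _ = 2 * ∫⁻ u, ∫⁻ v, H u v ∂μ ∂μ := by
        rw [← lintegral_lintegral_swap (f := H) hH.aemeasurable, two_mul]

lemma ofReal_integral_integral_le {X Y : Type*} [MeasurableSpace X] [MeasurableSpace Y]
    {μ : Measure X} {ν : Measure Y} (F : X → Y → ℝ) :
    ENNReal.ofReal (∫ u, ∫ v, F u v ∂ν ∂μ) ≤ ∫⁻ u, ∫⁻ v, ‖F u v‖ₑ ∂ν ∂μ :=
  calc ENNReal.ofReal (∫ u, ∫ v, F u v ∂ν ∂μ)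
      ≤ ‖∫ u, ∫ v, F u v ∂ν ∂μ‖ₑ := ofReal_le_enorm _
    _ ≤ ∫⁻ u, ‖∫ v, F u v ∂ν‖ₑ ∂μ := enorm_integral_le_lintegral_enorm _
    _ ≤ ∫⁻ u, ∫⁻ v, ‖F u v‖ₑ ∂ν ∂μ := lintegral_mono fun _ => enorm_integral_le_lintegral_enorm _

lemma enorm_inner_mul_le {E : Type*} [NormedAddCommGroup E] [InnerProductSpace ℝ E]
    (x y : E) {c K : ℝ} (h : |c| ≤ K) :
    ‖inner ℝ x y * c‖ₑ ≤ ‖x‖ₑ * ‖y‖ₑ * ENNReal.ofReal K := by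
  rw [← ofReal_norm, ← ofReal_norm, ← ofReal_norm, ← ENNReal.ofReal_mul (norm_nonneg _),
    ← ENNReal.ofReal_mul (by positivity)]
  refine ENNReal.ofReal_le_ofReal ?_
  rw [norm_mul, Real.norm_eq_abs, Real.norm_eq_abs]
  exact mul_le_mul (abs_real_inner_le_norm x y) h (abs_nonneg c) (by positivity)

lemma holderConjugate_two_div {α : ℝ} (hα0 : 0 < α) (hα : α < 1 / 2) :
    (2 / (1 + 2 * α)).HolderConjugate (2 / (1 - 2 * α)) := by
  rw [Real.holderConjugate_iff, inv_div, inv_div, one_lt_div (by linarith)]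
  constructor
  · linarith
  · ring

lemma lintegral_mul_indicator_Ici_le {α : ℝ} (hα0 : 0 < α) (hα : α < 1 / 2) (s : Set ℝ)
    {f : ℝ → ℝ≥0∞} (hf : Measurable f) {r : ℝ} (hr : 0 < r) (u : ℝ) :
    ∫⁻ v in s, f v * (Ici r).indicator (fun x => ENNReal.ofReal (x ^ (2 * α - 1))) |u - v| ≤
      (∫⁻ v in s, f v ^ (2 / (1 + 2 * α))) ^ ((1 + 2 * α) / 2) *
        ENNReal.ofReal ((2 / r) ^ ((1 - 2 * α) / 2)) := by
  have h12 : 0 < 1 - 2 * α := by linarith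
  have hq : 0 < 2 / (1 - 2 * α) := div_pos two_pos h12
  set k : ℝ → ℝ≥0∞ := (Ici r).indicator fun x => ENNReal.ofReal (x ^ (2 * α - 1)) with hk_def
  have hk : Measurable fun v => k |u - v| :=
    ((measurable_id.pow_const _).ennreal_ofReal.indicator measurableSet_Ici).comp
      (measurable_const.sub measurable_id).abs
  have hkq : ∀ x, k x ^ (2 / (1 - 2 * α)) =
      (Ici r).indicator (fun x => ENNReal.ofReal (x ^ (-2 : ℝ))) x := by
    intro x
    rw [hk_def]
    by_cases hx : x ∈ Ici r
    · have hx0 : 0 ≤ x := hr.le.trans hx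
      rw [indicator_of_mem hx, indicator_of_mem hx, ENNReal.ofReal_rpow_of_nonneg
        (rpow_nonneg hx0 _) hq.le, ← rpow_mul hx0]
      congr 2
      field_simp
      ring
    · rw [indicator_of_notMem hx, indicator_of_notMem hx, ENNReal.zero_rpow_of_pos hq]
  have hfar : ∫⁻ v, k |u - v| ^ (2 / (1 - 2 * α)) = ENNReal.ofReal (2 / r) := by
    simp_rw [hkq]
    rw [lintegral_indicator_Ici_rpow_abs_sub (by norm_num) hr]
    norm_num [rpow_neg_one, div_eq_mul_inv]
  calc ∫⁻ v in s, f v * k |u - v|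
      ≤ (∫⁻ v in s, f v ^ (2 / (1 + 2 * α))) ^ (1 / (2 / (1 + 2 * α))) *
          (∫⁻ v in s, k |u - v| ^ (2 / (1 - 2 * α))) ^ (1 / (2 / (1 - 2 * α))) :=
        ENNReal.lintegral_mul_le_Lp_mul_Lq _ (holderConjugate_two_div hα0 hα) hf.aemeasurable
          hk.aemeasurable
    _ ≤ (∫⁻ v in s, f v ^ (2 / (1 + 2 * α))) ^ ((1 + 2 * α) / 2) *
          ENNReal.ofReal (2 / r) ^ ((1 - 2 * α) / 2) := by
        rw [one_div_div, one_div_div, ← hfar]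
        gcongr
        exact Measure.restrict_le_self
    _ = _ := by rw [ENNReal.ofReal_rpow_of_nonneg (by positivity) (by linarith)]

lemma balanced_radius_bound {α a x : ℝ} (hα0 : 0 < α) (hα : α < 1 / 2) (ha : 0 < a) (hx : 0 < x) :
    x * (x * (((a / x) ^ (2 / (1 + 2 * α))) ^ (2 * α) / α)
        + a * (2 / (a / x) ^ (2 / (1 + 2 * α))) ^ ((1 - 2 * α) / 2)) ≤
      (1 / α + 2) * (a ^ (4 * α / (1 + 2 * α)) * x ^ (2 / (1 + 2 * α))) := by
  set b := a / x with hb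
  have hb0 : 0 < b := div_pos ha hx
  have hab : a = b * x := by rw [hb, div_mul_cancel₀ _ hx.ne']
  have hnear : (b ^ (2 / (1 + 2 * α))) ^ (2 * α) = b ^ (4 * α / (1 + 2 * α)) := by
    rw [← rpow_mul hb0.le]; congr 1; field_simp; ring
  have hfar : a * (2 / b ^ (2 / (1 + 2 * α))) ^ ((1 - 2 * α) / 2) =
      x * (2 ^ ((1 - 2 * α) / 2) * b ^ (4 * α / (1 + 2 * α))) := by
    rw [div_rpow zero_le_two (rpow_nonneg hb0.le _), ← rpow_mul hb0.le,
      show 2 / (1 + 2 * α) * ((1 - 2 * α) / 2) = 1 - 4 * α / (1 + 2 * α) by field_simp; ring,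
      rpow_sub hb0, rpow_one, hab]
    field_simp
  have hrhs : a ^ (4 * α / (1 + 2 * α)) * x ^ (2 / (1 + 2 * α)) =
      x ^ 2 * b ^ (4 * α / (1 + 2 * α)) := by
    rw [hab, mul_rpow hb0.le hx.le, mul_assoc, ← rpow_add hx,
      show 4 * α / (1 + 2 * α) + 2 / (1 + 2 * α) = 2 by field_simp; ring, rpow_two, mul_comm]
  have htwo : (2 : ℝ) ^ ((1 - 2 * α) / 2) ≤ 2 :=
    rpow_le_self_of_one_le one_le_two (by linarith)
  calc x * (x * ((b ^ (2 / (1 + 2 * α))) ^ (2 * α) / α)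
        + a * (2 / b ^ (2 / (1 + 2 * α))) ^ ((1 - 2 * α) / 2))
      = (1 / α + 2 ^ ((1 - 2 * α) / 2)) * (x ^ 2 * b ^ (4 * α / (1 + 2 * α))) := by
        rw [hnear, hfar]; ring
    _ ≤ (1 / α + 2) * (a ^ (4 * α / (1 + 2 * α)) * x ^ (2 / (1 + 2 * α))) := by
        rw [hrhs]; gcongr

lemma lintegral_ite_mul_abs_sub_rpow_le_of_radius {α : ℝ} (hα0 : 0 < α) (hα : α < 1 / 2)
    (s : Set ℝ) {f : ℝ → ℝ≥0∞} (hf : Measurable f) {r : ℝ} (hr : 0 < r) {u : ℝ}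
    (hu : f u ≠ ⊤) :
    ∫⁻ v in s, (if f v ≤ f u then f u * f v * ENNReal.ofReal (|u - v| ^ (2 * α - 1)) else 0) ≤
      f u * (f u * ENNReal.ofReal (r ^ (2 * α) / α) +
        (∫⁻ v in s, f v ^ (2 / (1 + 2 * α))) ^ ((1 + 2 * α) / 2) *
          ENNReal.ofReal ((2 / r) ^ ((1 - 2 * α) / 2))) := by
  set k : ℝ → ℝ≥0∞ := fun x => ENNReal.ofReal (x ^ (2 * α - 1))
  have hkN : Measurable fun v => (Iio r).indicator k |u - v| :=
    ((measurable_id.pow_const _).ennreal_ofReal.indicator measurableSet_Iio).comp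
      (measurable_const.sub measurable_id).abs
  -- split the kernel at radius `r`, and use `f v ≤ f u` only on the near part
  have hsplit : ∀ v, (if f v ≤ f u then f u * f v * k |u - v| else 0) ≤
      f u * (f u * (Iio r).indicator k |u - v| + f v * (Ici r).indicator k |u - v|) := by
    intro v
    split_ifs with hv
    · calc f u * f v * k |u - v|
          = f u * (f v * (Iio r).indicator k |u - v| + f v * (Ici r).indicator k |u - v|) := by
            rw [← mul_add, ← compl_Iio, indicator_self_add_compl_apply, mul_assoc]
        _ ≤ _ := by gcongr
    · exact zero_le
  have hnear : ∫⁻ v in s, (Iio r).indicator k |u - v| ≤ ENNReal.ofReal (r ^ (2 * α) / α) :=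
    calc ∫⁻ v in s, (Iio r).indicator k |u - v| ≤ ∫⁻ v, (Iio r).indicator k |u - v| :=
          setLIntegral_le_lintegral _ _
      _ = ENNReal.ofReal (r ^ (2 * α) / α) := by
          rw [lintegral_indicator_Iio_rpow_abs_sub (by linarith) hr, sub_add_cancel]
          congr 1; field_simp
  calc ∫⁻ v in s, (if f v ≤ f u then f u * f v * k |u - v| else 0)
      ≤ ∫⁻ v in s, f u * (f u * (Iio r).indicator k |u - v| + f v * (Ici r).indicator k |u - v|) :=
        lintegral_mono hsplit
    _ = f u * (f u * (∫⁻ v in s, (Iio r).indicator k |u - v|) +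
          ∫⁻ v in s, f v * (Ici r).indicator k |u - v|) := by
        rw [lintegral_const_mul' _ _ hu, lintegral_add_left (hkN.const_mul _),
          lintegral_const_mul' _ _ hu]
    _ ≤ _ := by
        gcongr
        exact lintegral_mul_indicator_Ici_le hα0 hα s hf hr u

lemma lintegral_ite_mul_abs_sub_rpow_le {α : ℝ} (hα0 : 0 < α) (hα : α < 1 / 2)
    (s : Set ℝ) {f : ℝ → ℝ≥0∞} (hf : Measurable f)
    (hS0 : ∫⁻ v in s, f v ^ (2 / (1 + 2 * α)) ≠ 0) (hST : ∫⁻ v in s, f v ^ (2 / (1 + 2 * α)) ≠ ⊤)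
    {u : ℝ} (hu : f u ≠ ⊤) :
    ∫⁻ v in s, (if f v ≤ f u then f u * f v * ENNReal.ofReal (|u - v| ^ (2 * α - 1)) else 0) ≤
      ENNReal.ofReal (1 / α + 2) * (∫⁻ v in s, f v ^ (2 / (1 + 2 * α))) ^ (2 * α) *
        f u ^ (2 / (1 + 2 * α)) := by
  set S := ∫⁻ v in s, f v ^ (2 / (1 + 2 * α))
  rcases eq_or_ne (f u) 0 with h0 | h0
  · simp [h0]
  set x := (f u).toReal
  set a := (S ^ ((1 + 2 * α) / 2)).toReal
  have hx : 0 < x := ENNReal.toReal_pos h0 hu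
  have ha : 0 < a := ENNReal.toReal_pos (by simp [hS0, hST]) (by simp [hS0, hST])
  have hfx : f u = ENNReal.ofReal x := (ENNReal.ofReal_toReal hu).symm
  have hSa : S ^ ((1 + 2 * α) / 2) = ENNReal.ofReal a :=
    (ENNReal.ofReal_toReal (by simp [hS0, hST])).symm
  have hSθ : S ^ (2 * α) = ENNReal.ofReal (a ^ (4 * α / (1 + 2 * α))) := by
    rw [← ENNReal.ofReal_rpow_of_nonneg ha.le (by positivity), ← hSa, ← ENNReal.rpow_mul]
    congr 1; field_simp; ring
  -- the radius that balances the near and far terms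
  refine (lintegral_ite_mul_abs_sub_rpow_le_of_radius hα0 hα s hf
    (rpow_pos_of_pos (div_pos ha hx) (2 / (1 + 2 * α))) hu).trans ?_
  rw [hSa, hSθ, hfx, ENNReal.ofReal_rpow_of_nonneg hx.le (by positivity)]
  simp (disch := positivity) only [← ENNReal.ofReal_mul, ← ENNReal.ofReal_add]
  exact ENNReal.ofReal_le_ofReal ((balanced_radius_bound hα0 hα ha hx).trans_eq (by ring))

theorem lintegral_lintegral_mul_abs_sub_rpow_le {α : ℝ} (hα0 : 0 < α) (hα : α < 1 / 2)
    (s : Set ℝ) {f : ℝ → ℝ≥0∞} (hf : Measurable f) :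
    ∫⁻ u in s, ∫⁻ v in s, f u * f v * ENNReal.ofReal (|u - v| ^ (2 * α - 1)) ≤
      ENNReal.ofReal (2 / α + 4) * (∫⁻ u in s, f u ^ (2 / (1 + 2 * α))) ^ (1 + 2 * α) := by
  set S := ∫⁻ u in s, f u ^ (2 / (1 + 2 * α))
  have hp : 0 < 2 / (1 + 2 * α) := div_pos two_pos (by linarith)
  rcases eq_or_ne S 0 with hS0 | hS0
  · have hf0 : f =ᵐ[volume.restrict s] 0 :=
      ENNReal.ae_eq_zero_of_lintegral_rpow_eq_zero hp.le hf.aemeasurable hS0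
    calc ∫⁻ u in s, ∫⁻ v in s, f u * f v * ENNReal.ofReal (|u - v| ^ (2 * α - 1))
        = ∫⁻ u in s, 0 := lintegral_congr_ae (hf0.mono fun u hu => by simp [hu])
      _ ≤ _ := by simp
  rcases eq_or_ne S ⊤ with hST | hST
  · rw [hST, ENNReal.top_rpow_of_pos (by linarith), ENNReal.mul_top (by positivity)]
    exact le_top
  have hfin : ∀ᵐ u ∂volume.restrict s, f u ≠ ⊤ :=
    (ae_lt_top (hf.pow_const _) hST).mono fun u hu => by
      simpa [ENNReal.rpow_eq_top_iff_of_pos hp] using hu.ne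
  calc ∫⁻ u in s, ∫⁻ v in s, f u * f v * ENNReal.ofReal (|u - v| ^ (2 * α - 1))
      ≤ 2 * ∫⁻ u in s, ∫⁻ v in s,
          (if f v ≤ f u then f u * f v * ENNReal.ofReal (|u - v| ^ (2 * α - 1)) else 0) :=
        lintegral_le_two_mul_lintegral_ite_of_symm hf
          ((measurable_fst.sub measurable_snd).abs.pow_const _).ennreal_ofReal
          fun u v => by rw [abs_sub_comm]
    _ ≤ 2 * ∫⁻ u in s, ENNReal.ofReal (1 / α + 2) * S ^ (2 * α) * f u ^ (2 / (1 + 2 * α)) := by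
        gcongr 2 * ?_
        exact lintegral_mono_ae (hfin.mono fun u hu =>
          lintegral_ite_mul_abs_sub_rpow_le hα0 hα s hf hS0 hST hu)
    _ = ENNReal.ofReal (2 / α + 4) * S ^ (1 + 2 * α) := by
        have hc : ENNReal.ofReal (2 / α + 4) = 2 * ENNReal.ofReal (1 / α + 2) := by
          rw [← ENNReal.ofReal_ofNat 2, ← ENNReal.ofReal_mul zero_le_two]
          ring_nf
        rw [lintegral_const_mul _ (hf.pow_const _)]
        change 2 * (_ * S) = _
        rw [add_comm 1, ENNReal.rpow_add _ _ hS0 hST, ENNReal.rpow_one, hc]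
        ring

theorem lintegral_lintegral_mul_abs_sub_rpow_le' {α : ℝ} (hα0 : 0 < α) (hα : α < 1 / 2)
    (s : Set ℝ) {f : ℝ → ℝ≥0∞} (hf : AEMeasurable f (volume.restrict s)) :
    ∫⁻ u in s, ∫⁻ v in s, f u * f v * ENNReal.ofReal (|u - v| ^ (2 * α - 1)) ≤
      ENNReal.ofReal (2 / α + 4) * (∫⁻ u in s, f u ^ (2 / (1 + 2 * α))) ^ (1 + 2 * α) := by
  have hmk := hf.ae_eq_mk
  calc ∫⁻ u in s, ∫⁻ v in s, f u * f v * ENNReal.ofReal (|u - v| ^ (2 * α - 1))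
      = ∫⁻ u in s, ∫⁻ v in s, hf.mk f u * hf.mk f v * ENNReal.ofReal (|u - v| ^ (2 * α - 1)) :=
        lintegral_congr_ae <| hmk.mono fun u hu => lintegral_congr_ae <|
          hmk.mono fun v hv => by simp only [hu, hv]
    _ ≤ ENNReal.ofReal (2 / α + 4) * (∫⁻ u in s, hf.mk f u ^ (2 / (1 + 2 * α))) ^ (1 + 2 * α) :=
        lintegral_lintegral_mul_abs_sub_rpow_le hα0 hα s hf.measurable_mk
    _ = _ := by
        congr 2
        exact lintegral_congr_ae (hmk.mono fun u hu => by simp only [hu])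

lemma ofReal_integral_integral_inner_mul_le {E : Type*} [NormedAddCommGroup E]
    [InnerProductSpace ℝ E] {α C : ℝ} (hα0 : 0 < α) (hα : α < 1 / 2) (hC : 0 ≤ C) (s : Set ℝ)
    {G : ℝ → E} (hG : AEStronglyMeasurable G (volume.restrict s)) {φ : ℝ → ℝ → ℝ}
    (hφ : ∀ u v : ℝ, u ≠ v → |φ u v| ≤ C * |u - v| ^ (2 * α - 1)) :
    ENNReal.ofReal (∫ u in s, ∫ v in s, inner ℝ (G u) (G v) * φ u v) ≤
      ENNReal.ofReal (C * (2 / α + 4)) *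
        (∫⁻ u in s, ‖G u‖ₑ ^ (2 / (1 + 2 * α))) ^ (1 + 2 * α) := by
  have hdiag : ∀ u, ∀ᵐ v ∂volume.restrict s, v ≠ u :=
    fun u => measure_eq_zero_iff_ae_notMem.1 (measure_singleton u)
  calc ENNReal.ofReal (∫ u in s, ∫ v in s, inner ℝ (G u) (G v) * φ u v)
      ≤ ∫⁻ u in s, ∫⁻ v in s, ‖inner ℝ (G u) (G v) * φ u v‖ₑ :=
        ofReal_integral_integral_le _
    _ ≤ ∫⁻ u in s, ∫⁻ v in s,
          ENNReal.ofReal C * (‖G u‖ₑ * ‖G v‖ₑ * ENNReal.ofReal (|u - v| ^ (2 * α - 1))) :=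
        lintegral_mono fun u => lintegral_mono_ae <| (hdiag u).mono fun v hv =>
          (enorm_inner_mul_le _ _ (hφ u v (Ne.symm hv))).trans_eq <| by
            rw [ENNReal.ofReal_mul hC]; ring
    _ ≤ ENNReal.ofReal C * (ENNReal.ofReal (2 / α + 4) *
          (∫⁻ u in s, ‖G u‖ₑ ^ (2 / (1 + 2 * α))) ^ (1 + 2 * α)) := by
        simp_rw [lintegral_const_mul' _ _ ENNReal.ofReal_ne_top]
        gcongr
        exact lintegral_lintegral_mul_abs_sub_rpow_le' hα0 hα s hG.enorm
    _ = _ := by rw [ENNReal.ofReal_mul hC, mul_assoc]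

/-- For `G : ℝ → ℒ₂(U,V)` (the Hilbert space `E` of Hilbert–Schmidt
operators) with `‖G‖ ∈ L^{2/(1+2α)}(s,t)` and `|φ(u,v)| ≤ C |u-v|^(2α-1)`,
`∫_s^t ∫_s^t ⟪G u, G v⟫ φ(u,v) du dv ≤ C' (∫_s^t ‖G u‖^{2/(1+2α)} du)^{1+2α}`
with `C'` depending only on `C` and `α`. -/
theorem stmt6 {E : Type*} [NormedAddCommGroup E] [InnerProductSpace ℝ E]
    (α C : ℝ) (hα0 : 0 < α) (hα : α < 1/2) (hC : 0 < C) :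
    ∃ C' : ℝ, 0 < C' ∧
      ∀ (s t : ℝ), s < t → ∀ (G : ℝ → E) (φ : ℝ → ℝ → ℝ),
        AEStronglyMeasurable G (volume.restrict (Set.Ioc s t)) →
        (∀ u v : ℝ, u ≠ v → |φ u v| ≤ C * |u - v| ^ (2*α - 1)) →
        IntervalIntegrable (fun u => ‖G u‖ ^ (2/(1+2*α))) volume s t →
        (∫ u in s..t, ∫ v in s..t, (inner ℝ (G u) (G v) : ℝ) * φ u v) ≤
          C' * (∫ u in s..t, ‖G u‖ ^ (2/(1+2*α))) ^ (1+2*α) := by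
  refine ⟨C * (2 / α + 4), by positivity, fun s t hst G φ hG hφ hInt => ?_⟩
  simp_rw [integral_of_le hst.le]
  have hI : ∫⁻ u in Ioc s t, ‖G u‖ₑ ^ (2 / (1 + 2 * α)) =
      ENNReal.ofReal (∫ u in Ioc s t, ‖G u‖ ^ (2 / (1 + 2 * α))) := by
    rw [ofReal_integral_eq_lintegral_ofReal
      ((intervalIntegrable_iff_integrableOn_Ioc_of_le hst.le).1 hInt)
      (ae_of_all _ fun u => rpow_nonneg (norm_nonneg _) _)]
    exact lintegral_congr fun u => by
      rw [← ofReal_norm, ENNReal.ofReal_rpow_of_nonneg (norm_nonneg _) (by positivity)]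
  have hbound := ofReal_integral_integral_inner_mul_le hα0 hα hC.le _ hG hφ
  rw [hI, ENNReal.ofReal_rpow_of_nonneg (by positivity) (by positivity),
    ← ENNReal.ofReal_mul (by positivity)] at hbound
  exact (ENNReal.ofReal_le_ofReal_iff (by positivity)).1 hbound
end

section
/- For H ∈ (1/2, 1) and β > 1/2, the integral J(β, H) = ∫_0^∞ ∫_0^∞ (∫_0^∞ (u+ξ+1)^{−β} (v+ξ+1)^{−β} dξ) |u−v|^{2H−2} du dv is finite if and only if β > H + 1/2. -/
/-!
By AM-GM, `(u + ξ + 1)(v + ξ + 1) ≥ (ξ + √((u + 1)(v + 1)))²`, so the inner integral is at most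
`((u + 1)(v + 1))^(1/2 - β) / (2β - 1)`. This bound is symmetric in `(u, v)`, so it suffices to
integrate over `v = u + s ≥ u`; splitting at `s = u + 1` gives
`∫ (u + 1 + s)^(1/2 - β) s^(2H - 2) ds = O((u + 1)^(2H - 1/2 - β))`, and what remains is
`∫ (u + 1)^(2H - 2β) du < ∞` for `β > H + 1/2`.
Conversely, for `u ≥ 1` and `u < v < 2u` the inner integral is at least `(3u)^(1 - 2β) / (2β - 1)`
and `|u - v|^(2H - 2) ≥ u^(2H - 2)`, so the `v`-integral is `≳ u^(2H - 2β)`, which is not integrable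
on `(1, ∞)` when `β ≤ H + 1/2`.
-/

open MeasureTheory Real Set
open scoped ENNReal

lemma setLIntegral_Ioi_comp_add_right (f : ℝ → ℝ≥0∞) (b c : ℝ) :
    ∫⁻ x in Ioi b, f (x + c) = ∫⁻ y in Ioi (b + c), f y := by
  have h := (measurePreserving_add_right volume c).setLIntegral_comp_preimage_emb
    (measurableEmbedding_addRight c) f (Ioi (b + c))
  rwa [preimage_add_const_Ioi, add_sub_cancel_right] at h

lemma lintegral_Ioi_rpow {p c : ℝ} (hp : p < -1) (hc : 0 < c) :
    ∫⁻ x in Ioi c, ENNReal.ofReal (x ^ p) = ENNReal.ofReal (c ^ (p + 1) / -(p + 1)) := by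
  rw [← ofReal_integral_eq_lintegral_ofReal (integrableOn_Ioi_rpow_of_lt hp hc),
    integral_Ioi_rpow_of_lt hp hc, neg_div, div_neg]
  filter_upwards [ae_restrict_mem measurableSet_Ioi] with x hx
  exact rpow_nonneg (hc.trans hx).le p

lemma lintegral_Ioi_zero_add_rpow {p a : ℝ} (hp : p < -1) (ha : 0 < a) :
    ∫⁻ x in Ioi 0, ENNReal.ofReal ((x + a) ^ p) = ENNReal.ofReal (a ^ (p + 1) / -(p + 1)) := by
  rw [setLIntegral_Ioi_comp_add_right (fun x => ENNReal.ofReal (x ^ p)), zero_add,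
    lintegral_Ioi_rpow hp ha]

lemma lintegral_Ioi_rpow_eq_top {p c : ℝ} (hp : -1 ≤ p) (hc : 0 < c) :
    ∫⁻ x in Ioi c, ENNReal.ofReal (x ^ p) = ⊤ := by
  by_contra h
  have hint : IntegrableOn (fun x : ℝ => x ^ p) (Ioi c) := by
    refine ⟨by fun_prop, (hasFiniteIntegral_iff_ofReal ?_).2 (lt_top_iff_ne_top.2 h)⟩
    filter_upwards [ae_restrict_mem measurableSet_Ioi] with x hx
    exact rpow_nonneg (hc.trans hx).le p
  linarith [(integrableOn_Ioi_rpow_iff hc).1 hint]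

lemma lintegral_Ioc_zero_rpow {p c : ℝ} (hp : -1 < p) (hc : 0 ≤ c) :
    ∫⁻ x in Ioc 0 c, ENNReal.ofReal (x ^ p) = ENNReal.ofReal (c ^ (p + 1) / (p + 1)) := by
  rw [← ofReal_integral_eq_lintegral_ofReal (intervalIntegral.intervalIntegrable_rpow' hp).1,
    ← intervalIntegral.integral_of_le hc, integral_rpow (Or.inl hp),
    zero_rpow (by linarith), sub_zero]
  filter_upwards [ae_restrict_mem measurableSet_Ioc] with x hx
  exact rpow_nonneg hx.1.le p

noncomputable def rpowCorrelation (β u v : ℝ) : ℝ≥0∞ :=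
  ∫⁻ ξ in Ioi (0:ℝ), ENNReal.ofReal ((u + ξ + 1) ^ (-β) * (v + ξ + 1) ^ (-β))

lemma rpowCorrelation_le {β u v : ℝ} (hβ : 1/2 < β) (hu : -1 < u) (hv : -1 < v) :
    rpowCorrelation β u v ≤
      ENNReal.ofReal (1 / (2*β - 1)) *
        ENNReal.ofReal ((u + 1) ^ (-(β - 1/2)) * (v + 1) ^ (-(β - 1/2))) := by
  have hu' : 0 < u + 1 := by linarith
  have hv' : 0 < v + 1 := by linarith
  set m := √(u + 1) * √(v + 1)
  have hm : 0 < m := by positivity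
  have hmm : m * m = (u + 1) * (v + 1) := by
    rw [mul_mul_mul_comm, Real.mul_self_sqrt hu'.le, Real.mul_self_sqrt hv'.le]
  have hpt : ∀ ξ ∈ Ioi (0:ℝ), ENNReal.ofReal ((u + ξ + 1) ^ (-β) * (v + ξ + 1) ^ (-β)) ≤
      ENNReal.ofReal ((ξ + m) ^ (-(2*β))) := by
    intro ξ (hξ : 0 < ξ)
    have hsq : (ξ + m) * (ξ + m) ≤ (u + ξ + 1) * (v + ξ + 1) := by
      nlinarith [sq_nonneg (√(u + 1) - √(v + 1)), Real.sq_sqrt hu'.le, Real.sq_sqrt hv'.le]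
    apply ENNReal.ofReal_le_ofReal
    calc (u + ξ + 1) ^ (-β) * (v + ξ + 1) ^ (-β) = ((u + ξ + 1) * (v + ξ + 1)) ^ (-β) :=
          (mul_rpow (by linarith) (by linarith)).symm
      _ ≤ ((ξ + m) * (ξ + m)) ^ (-β) := rpow_le_rpow_of_nonpos (by positivity) hsq (by linarith)
      _ = (ξ + m) ^ (-(2*β)) := by
          rw [mul_rpow (by positivity) (by positivity), ← rpow_add (by positivity)]
          ring_nf
  calc rpowCorrelation β u v ≤ ∫⁻ ξ in Ioi (0:ℝ), ENNReal.ofReal ((ξ + m) ^ (-(2*β))) :=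
        setLIntegral_mono' measurableSet_Ioi hpt
    _ = ENNReal.ofReal (m ^ (-(2*β) + 1) / -(-(2*β) + 1)) :=
        lintegral_Ioi_zero_add_rpow (by linarith) hm
    _ = _ := by
        rw [← ENNReal.ofReal_mul (one_div_nonneg.2 (by linarith)), ← mul_rpow hu'.le hv'.le,
          ← hmm, mul_rpow hm.le hm.le, ← rpow_add hm]
        congr 1
        ring_nf

lemma ofReal_le_rpowCorrelation {β u v : ℝ} (hβ : 1/2 < β) (hu : -1 < u) (huv : u ≤ v) :
    ENNReal.ofReal ((v + 1) ^ (1 - 2*β) / (2*β - 1)) ≤ rpowCorrelation β u v := by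
  have hv : 0 < v + 1 := by linarith
  calc ENNReal.ofReal ((v + 1) ^ (1 - 2*β) / (2*β - 1))
      = ∫⁻ ξ in Ioi (0:ℝ), ENNReal.ofReal ((ξ + (v + 1)) ^ (-(2*β))) := by
        rw [lintegral_Ioi_zero_add_rpow (by linarith) hv]
        ring_nf
    _ ≤ rpowCorrelation β u v := by
        refine setLIntegral_mono' measurableSet_Ioi fun ξ (hξ : 0 < ξ) => ?_
        apply ENNReal.ofReal_le_ofReal
        rw [show -(2*β) = -β + -β by ring, rpow_add (by linarith),
          show ξ + (v + 1) = v + ξ + 1 by ring]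
        exact mul_le_mul_of_nonneg_right
          (rpow_le_rpow_of_nonpos (by linarith) (by linarith) (by linarith))
          (rpow_nonneg (by linarith) _)

lemma lintegral_lintegral_le_two_mul_of_symm {μ : Measure ℝ} [SFinite μ] {F : ℝ → ℝ → ℝ≥0∞}
    (hF : Measurable (Function.uncurry F)) (hsymm : ∀ u v, F u v = F v u) :
    ∫⁻ u, ∫⁻ v, F u v ∂μ ∂μ ≤ 2 * ∫⁻ u, ∫⁻ v in Ici u, F u v ∂μ ∂μ := by
  set T : ℝ → ℝ → ℝ≥0∞ := fun u v => if u ≤ v then F u v else 0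
  have hT : Measurable (Function.uncurry T) :=
    Measurable.ite (measurableSet_le measurable_fst measurable_snd) hF measurable_const
  have hTF : ∀ u, ∫⁻ v, T u v ∂μ = ∫⁻ v in Ici u, F u v ∂μ := fun u => by
    rw [← lintegral_indicator measurableSet_Ici]
    rfl
  calc ∫⁻ u, ∫⁻ v, F u v ∂μ ∂μ ≤ ∫⁻ u, ∫⁻ v, (T u v + T v u) ∂μ ∂μ := by
        refine lintegral_mono fun u => lintegral_mono fun v => ?_
        rcases le_total u v with huv | hvu
        · simp [T, huv]
        · simp [T, hvu, hsymm u v]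
    _ = ∫⁻ u, ∫⁻ v, T u v ∂μ ∂μ + ∫⁻ u, ∫⁻ v, T v u ∂μ ∂μ := by
        rw [← lintegral_add_left hT.lintegral_prod_right]
        exact lintegral_congr fun u => lintegral_add_left hT.of_uncurry_left _
    _ = 2 * ∫⁻ u, ∫⁻ v in Ici u, F u v ∂μ ∂μ := by
        rw [lintegral_lintegral_swap (f := fun u v => T v u)
          (hT.comp measurable_swap).aemeasurable, ← two_mul]
        simp only [hTF]

lemma setLIntegral_Ioi_setLIntegral_Ioi_le_of_symm {F : ℝ → ℝ → ℝ≥0∞}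
    (hF : Measurable (Function.uncurry F)) (hsymm : ∀ u v, F u v = F v u) :
    ∫⁻ u in Ioi 0, ∫⁻ v in Ioi 0, F u v ≤ 2 * ∫⁻ u in Ioi 0, ∫⁻ s in Ioi 0, F u (s + u) := by
  refine (lintegral_lintegral_le_two_mul_of_symm hF hsymm).trans_eq ?_
  congr 1
  refine setLIntegral_congr_fun measurableSet_Ioi fun u (hu : 0 < u) => ?_
  rw [Measure.restrict_restrict measurableSet_Ici, inter_eq_left.2 (Ici_subset_Ioi.2 hu),
    ← setLIntegral_congr Ioi_ae_eq_Ici]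
  simpa using (setLIntegral_Ioi_comp_add_right (F u) 0 u).symm

lemma lintegral_Ioi_add_rpow_mul_rpow_le {a γ p : ℝ} (ha : 0 < a) (hp : -1 < p)
    (hpγ : p + 1 < γ) :
    ∫⁻ s in Ioi 0, ENNReal.ofReal ((s + a) ^ (-γ) * s ^ p) ≤
      ENNReal.ofReal ((1 / (p + 1) + 1 / (γ - p - 1)) * a ^ (p + 1 - γ)) := by
  have near : ∫⁻ s in Ioc 0 a, ENNReal.ofReal ((s + a) ^ (-γ) * s ^ p) ≤
      ENNReal.ofReal (a ^ (-γ)) * ENNReal.ofReal (a ^ (p + 1) / (p + 1)) := by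
    rw [← lintegral_Ioc_zero_rpow hp ha.le, ← lintegral_const_mul' _ _ ENNReal.ofReal_ne_top]
    refine setLIntegral_mono' measurableSet_Ioc fun s hs => ?_
    rw [← ENNReal.ofReal_mul (by positivity)]
    exact ENNReal.ofReal_le_ofReal (mul_le_mul_of_nonneg_right
      (rpow_le_rpow_of_nonpos ha (by linarith [hs.1]) (by linarith)) (rpow_nonneg hs.1.le _))
  have far : ∫⁻ s in Ioi a, ENNReal.ofReal ((s + a) ^ (-γ) * s ^ p) ≤
      ENNReal.ofReal (a ^ (p - γ + 1) / -(p - γ + 1)) := by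
    rw [← lintegral_Ioi_rpow (by linarith) ha]
    refine setLIntegral_mono' measurableSet_Ioi fun s (hs : a < s) => ?_
    rw [show p - γ = -γ + p by ring, rpow_add (by linarith)]
    exact ENNReal.ofReal_le_ofReal (mul_le_mul_of_nonneg_right
      (rpow_le_rpow_of_nonpos (by linarith) (by linarith) (by linarith))
      (rpow_nonneg (by linarith) _))
  rw [← Ioc_union_Ioi_eq_Ioi ha.le, lintegral_union measurableSet_Ioi Ioc_disjoint_Ioi_same]
  refine (add_le_add near far).trans_eq ?_
  have hpow : a ^ (-γ) * a ^ (p + 1) = a ^ (p + 1 - γ) := by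
    rw [← rpow_add ha]
    ring_nf
  rw [← ENNReal.ofReal_mul (by positivity),
    ← ENNReal.ofReal_add (mul_nonneg (by positivity) (div_nonneg (by positivity) (by linarith)))
      (div_nonneg (by positivity) (by linarith)), show p - γ + 1 = p + 1 - γ by ring, ← hpow]
  congr 1
  ring

noncomputable def weightedAbsRpow (γ p u v : ℝ) : ℝ≥0∞ :=
  ENNReal.ofReal ((u + 1) ^ (-γ) * (v + 1) ^ (-γ) * |u - v| ^ p)

lemma weightedAbsRpow_comm (γ p u v : ℝ) :
    weightedAbsRpow γ p u v = weightedAbsRpow γ p v u := by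
  rw [weightedAbsRpow, weightedAbsRpow, abs_sub_comm, mul_comm ((u + 1) ^ (-γ))]

lemma measurable_weightedAbsRpow (γ p : ℝ) :
    Measurable (Function.uncurry (weightedAbsRpow γ p)) := by
  unfold weightedAbsRpow
  fun_prop

lemma lintegral_weightedAbsRpow_add_le {γ p u : ℝ} (hp : -1 < p) (hpγ : p + 1 < γ)
    (hu : -1 < u) :
    ∫⁻ s in Ioi 0, weightedAbsRpow γ p u (s + u) ≤
      ENNReal.ofReal ((1 / (p + 1) + 1 / (γ - p - 1)) * (u + 1) ^ (p + 1 - 2*γ)) := by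
  have hu' : 0 < u + 1 := by linarith
  calc ∫⁻ s in Ioi 0, weightedAbsRpow γ p u (s + u)
      = ∫⁻ s in Ioi 0, ENNReal.ofReal ((u + 1) ^ (-γ)) *
          ENNReal.ofReal ((s + (u + 1)) ^ (-γ) * s ^ p) := by
        refine setLIntegral_congr_fun measurableSet_Ioi fun s (hs : 0 < s) => ?_
        rw [weightedAbsRpow, ← ENNReal.ofReal_mul (rpow_nonneg hu'.le _),
          show u - (s + u) = -s by ring, abs_neg, abs_of_pos hs,
          show s + u + 1 = s + (u + 1) by ring, mul_assoc]
    _ = ENNReal.ofReal ((u + 1) ^ (-γ)) *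
          ∫⁻ s in Ioi 0, ENNReal.ofReal ((s + (u + 1)) ^ (-γ) * s ^ p) :=
        lintegral_const_mul' _ _ ENNReal.ofReal_ne_top
    _ ≤ ENNReal.ofReal ((u + 1) ^ (-γ)) *
          ENNReal.ofReal ((1 / (p + 1) + 1 / (γ - p - 1)) * (u + 1) ^ (p + 1 - γ)) := by
        gcongr
        exact lintegral_Ioi_add_rpow_mul_rpow_le hu' hp hpγ
    _ = _ := by
        rw [← ENNReal.ofReal_mul (rpow_nonneg hu'.le _), mul_left_comm, ← rpow_add hu']
        ring_nf

lemma lintegral_lintegral_weightedAbsRpow_ne_top {γ p : ℝ} (hp : -1 < p) (hpγ : p + 1 < γ)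
    (hγ : p + 2 < 2*γ) :
    ∫⁻ u in Ioi 0, ∫⁻ v in Ioi 0, weightedAbsRpow γ p u v ≠ ⊤ := by
  set C := 1 / (p + 1) + 1 / (γ - p - 1)
  have hC : 0 ≤ C := add_nonneg (one_div_nonneg.2 (by linarith)) (one_div_nonneg.2 (by linarith))
  refine LT.lt.ne ?_
  calc ∫⁻ u in Ioi 0, ∫⁻ v in Ioi 0, weightedAbsRpow γ p u v
      ≤ 2 * ∫⁻ u in Ioi 0, ∫⁻ s in Ioi 0, weightedAbsRpow γ p u (s + u) :=
        setLIntegral_Ioi_setLIntegral_Ioi_le_of_symm (measurable_weightedAbsRpow γ p)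
          (weightedAbsRpow_comm γ p)
    _ ≤ 2 * ∫⁻ u in Ioi 0, ENNReal.ofReal C * ENNReal.ofReal ((u + 1) ^ (p + 1 - 2*γ)) := by
        gcongr _ * ?_
        refine setLIntegral_mono' measurableSet_Ioi fun u (hu : 0 < u) => ?_
        rw [← ENNReal.ofReal_mul hC]
        exact lintegral_weightedAbsRpow_add_le hp hpγ (by linarith)
    _ = 2 * (ENNReal.ofReal C *
          ENNReal.ofReal (1 ^ (p + 1 - 2*γ + 1) / -(p + 1 - 2*γ + 1))) := by
        rw [lintegral_const_mul' _ _ ENNReal.ofReal_ne_top,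
          lintegral_Ioi_zero_add_rpow (by linarith) one_pos]
    _ < ⊤ := by finiteness

lemma lintegral_rpowCorrelation_mul_ne_top {H β : ℝ} (hH1 : 1/2 < H) (hH2 : H ≤ 1)
    (hβH : H + 1/2 < β) :
    ∫⁻ u in Ioi 0, ∫⁻ v in Ioi 0,
      rpowCorrelation β u v * ENNReal.ofReal (|u - v| ^ (2*H - 2)) ≠ ⊤ := by
  have hkernel : ∀ u ∈ Ioi (0:ℝ), ∀ v ∈ Ioi (0:ℝ),
      rpowCorrelation β u v * ENNReal.ofReal (|u - v| ^ (2*H - 2)) ≤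
        ENNReal.ofReal (1 / (2*β - 1)) * weightedAbsRpow (β - 1/2) (2*H - 2) u v :=
      fun u (hu : 0 < u) v (hv : 0 < v) => by
    calc rpowCorrelation β u v * ENNReal.ofReal (|u - v| ^ (2*H - 2))
        ≤ ENNReal.ofReal (1 / (2*β - 1)) *
            ENNReal.ofReal ((u + 1) ^ (-(β - 1/2)) * (v + 1) ^ (-(β - 1/2))) *
            ENNReal.ofReal (|u - v| ^ (2*H - 2)) := by
          gcongr
          exact rpowCorrelation_le (by linarith) (by linarith) (by linarith)
      _ = ENNReal.ofReal (1 / (2*β - 1)) * weightedAbsRpow (β - 1/2) (2*H - 2) u v := by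
          rw [mul_assoc, ← ENNReal.ofReal_mul (by positivity), weightedAbsRpow]
  have hle : ∫⁻ u in Ioi 0, ∫⁻ v in Ioi 0,
      rpowCorrelation β u v * ENNReal.ofReal (|u - v| ^ (2*H - 2)) ≤
        ENNReal.ofReal (1 / (2*β - 1)) *
          ∫⁻ u in Ioi 0, ∫⁻ v in Ioi 0, weightedAbsRpow (β - 1/2) (2*H - 2) u v := by
    simp only [← lintegral_const_mul' _ _ ENNReal.ofReal_ne_top]
    exact setLIntegral_mono' measurableSet_Ioi fun u hu =>
      setLIntegral_mono' measurableSet_Ioi (hkernel u hu)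
  exact ne_top_of_le_ne_top (ENNReal.mul_ne_top ENNReal.ofReal_ne_top
    (lintegral_lintegral_weightedAbsRpow_ne_top (by linarith) (by linarith) (by linarith))) hle

lemma le_lintegral_rpowCorrelation_mul {H β u : ℝ} (hH : H ≤ 1) (hβ : 1/2 < β) (hu : 1 ≤ u) :
    ENNReal.ofReal (3 ^ (1 - 2*β) / (2*β - 1) * u ^ (2*H - 2*β)) ≤
      ∫⁻ v in Ioi 0, rpowCorrelation β u v * ENNReal.ofReal (|u - v| ^ (2*H - 2)) := by
  have hu0 : 0 < u := by linarith
  have hβ' : 0 < 2*β - 1 := by linarith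
  have hpt : ∀ v ∈ Ioo u (2*u),
      ENNReal.ofReal ((3*u) ^ (1 - 2*β) / (2*β - 1) * u ^ (2*H - 2)) ≤
        rpowCorrelation β u v * ENNReal.ofReal (|u - v| ^ (2*H - 2)) := by
    rintro v ⟨huv, hv2u⟩
    rw [ENNReal.ofReal_mul (div_nonneg (by positivity) hβ'.le)]
    gcongr ?_ * ?_
    · refine le_trans (ENNReal.ofReal_le_ofReal ?_)
        (ofReal_le_rpowCorrelation hβ (by linarith) huv.le)
      exact div_le_div_of_nonneg_right
        (rpow_le_rpow_of_nonpos (by linarith) (by linarith) (by linarith)) hβ'.le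
    · apply ENNReal.ofReal_le_ofReal
      rw [abs_sub_comm, abs_of_pos (by linarith)]
      exact rpow_le_rpow_of_nonpos (by linarith) (by linarith) (by linarith)
  calc ENNReal.ofReal (3 ^ (1 - 2*β) / (2*β - 1) * u ^ (2*H - 2*β))
      = ∫⁻ _ in Ioo u (2*u),
          ENNReal.ofReal ((3*u) ^ (1 - 2*β) / (2*β - 1) * u ^ (2*H - 2)) := by
        have hpow : u ^ (2*H - 2*β) = u ^ (1 - 2*β) * u ^ (2*H - 2) * u := by
          rw [← rpow_add hu0, ← rpow_add_one hu0.ne']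
          ring_nf
        rw [setLIntegral_const, Real.volume_Ioo,
          ← ENNReal.ofReal_mul (mul_nonneg (div_nonneg (by positivity) hβ'.le) (by positivity)),
          hpow, mul_rpow (by norm_num) hu0.le, show 2*u - u = u by ring]
        congr 1
        ring
    _ ≤ ∫⁻ v in Ioo u (2*u), rpowCorrelation β u v * ENNReal.ofReal (|u - v| ^ (2*H - 2)) :=
        setLIntegral_mono' measurableSet_Ioo hpt
    _ ≤ _ := lintegral_mono_set fun v hv => hu0.trans hv.1

lemma lintegral_rpowCorrelation_mul_eq_top {H β : ℝ} (hH : H ≤ 1) (hβ : 1/2 < β)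
    (hβH : β ≤ H + 1/2) :
    ∫⁻ u in Ioi 0, ∫⁻ v in Ioi 0,
      rpowCorrelation β u v * ENNReal.ofReal (|u - v| ^ (2*H - 2)) = ⊤ := by
  set c := 3 ^ (1 - 2*β) / (2*β - 1)
  have hc : 0 < c := div_pos (by positivity) (by linarith)
  refine eq_top_iff.2 ?_
  calc ⊤ = ENNReal.ofReal c * ∫⁻ u in Ioi 1, ENNReal.ofReal (u ^ (2*H - 2*β)) := by
        rw [lintegral_Ioi_rpow_eq_top (by linarith) one_pos,
          ENNReal.mul_top (ENNReal.ofReal_pos.2 hc).ne']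
    _ = ∫⁻ u in Ioi 1, ENNReal.ofReal (c * u ^ (2*H - 2*β)) := by
        rw [← lintegral_const_mul' _ _ ENNReal.ofReal_ne_top]
        exact lintegral_congr fun u => (ENNReal.ofReal_mul hc.le).symm
    _ ≤ ∫⁻ u in Ioi 1, ∫⁻ v in Ioi 0,
          rpowCorrelation β u v * ENNReal.ofReal (|u - v| ^ (2*H - 2)) :=
        setLIntegral_mono' measurableSet_Ioi fun u hu =>
          le_lintegral_rpowCorrelation_mul hH hβ (le_of_lt hu)
    _ ≤ _ := lintegral_mono_set (Ioi_subset_Ioi zero_le_one)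

/-- For `H ∈ (1/2,1)` and `β > 1/2`, the (nonnegative) integral
`J(β,H) = ∫_0^∞ ∫_0^∞ (∫_0^∞ (u+ξ+1)^{-β} (v+ξ+1)^{-β} dξ) |u-v|^{2H-2} du dv`
is finite if and only if `β > H + 1/2`. -/
theorem stmt13 (H β : ℝ) (hH1 : 1/2 < H) (hH2 : H < 1) (hβ : 1/2 < β) :
    (∫⁻ u in Ioi (0:ℝ), ∫⁻ v in Ioi (0:ℝ),
        (∫⁻ ξ in Ioi (0:ℝ),
          ENNReal.ofReal ((u + ξ + 1) ^ (-β) * (v + ξ + 1) ^ (-β))) *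
        ENNReal.ofReal (|u - v| ^ (2*H - 2))) ≠ ⊤ ↔
      H + 1/2 < β := by
  refine ⟨fun hfin => ?_, lintegral_rpowCorrelation_mul_ne_top hH1 hH2.le⟩
  by_contra! hβH
  exact hfin (lintegral_rpowCorrelation_mul_eq_top hH2.le hβ hβH)
end
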